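/- Let p₁, p₂, p₃, p₄ ∈ ℂ[ζ₁,ζ₂,ζ₃] be O(2,ℂ)-invariant polynomials. Then the following two conditions are equivalent: (i) ζ₁²·p₁ + ζ₂²·p₂ + ζ₁ζ₂·p₃ + p₄ = 0; (ii) p₁ = p₂, p₃ = 0, and (ζ₁²+ζ₂²)·p₁ + p₄ = 0. -/
import Mathlib


noncomputable section

/-- `O(2,ℂ)`-invariance of a polynomial in `ℂ[ζ₁,ζ₂,ζ₃]` (acting on the first two
variables, fixing the third). -/
def IsO2Inv (p : MvPolynomial (Fin 3) ℂ) : Prop :=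
  ∀ g : Matrix (Fin 2) (Fin 2) ℂ, g.transpose * g = 1 →
    MvPolynomial.aeval
      ![MvPolynomial.C (g 0 0) * MvPolynomial.X 0 + MvPolynomial.C (g 0 1) * MvPolynomial.X 1,
        MvPolynomial.C (g 1 0) * MvPolynomial.X 0 + MvPolynomial.C (g 1 1) * MvPolynomial.X 1,
        MvPolynomial.X 2] p = p

open MvPolynomial

lemma aux_sq_ne : (X 0 ^ 2 - X 1 ^ 2 : MvPolynomial (Fin 3) ℂ) ≠ 0 := by
  intro h
  have := congrArg (eval ![1, 0, 0]) h
  simp at this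

lemma aux_xy_ne : ((2 : MvPolynomial (Fin 3) ℂ) * (X 0 * X 1)) ≠ 0 := by
  intro h
  have := congrArg (eval ![1, 1, 0]) h
  simp at this

lemma swap_orth : (!![(0:ℂ),1;1,0] : Matrix (Fin 2) (Fin 2) ℂ).transpose * !![(0:ℂ),1;1,0] = 1 := by
  ext i j
  fin_cases i <;> fin_cases j <;>
    simp [Matrix.mul_apply, Fin.sum_univ_two, Matrix.one_apply, Matrix.transpose, Matrix.vecHead, Matrix.vecTail]

lemma neg_orth : (!![(1:ℂ),0;0,-1] : Matrix (Fin 2) (Fin 2) ℂ).transpose * !![(1:ℂ),0;0,-1] = 1 := by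
  ext i j
  fin_cases i <;> fin_cases j <;>
    simp [Matrix.mul_apply, Fin.sum_univ_two, Matrix.one_apply, Matrix.transpose, Matrix.vecHead, Matrix.vecTail]

lemma inv_swap {p : MvPolynomial (Fin 3) ℂ} (h : IsO2Inv p) :
    bind₁ ![X 1, X 0, X 2] p = p := by
  have := h !![(0:ℂ),1;1,0] swap_orth
  simpa using this

lemma invRefl {p : MvPolynomial (Fin 3) ℂ} (h : IsO2Inv p) :
    bind₁ ![X 0, -X 1, X 2] p = p := by
  have := h !![(1:ℂ),0;0,-1] neg_orth
  simpa using this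

theorem statement14 (p1 p2 p3 p4 : MvPolynomial (Fin 3) ℂ)
    (h1 : IsO2Inv p1) (h2 : IsO2Inv p2) (h3 : IsO2Inv p3) (h4 : IsO2Inv p4) :
    (MvPolynomial.X 0 ^ 2 * p1 + MvPolynomial.X 1 ^ 2 * p2 +
        MvPolynomial.X 0 * MvPolynomial.X 1 * p3 + p4 = 0) ↔
      (p1 = p2 ∧ p3 = 0 ∧
        (MvPolynomial.X 0 ^ 2 + MvPolynomial.X 1 ^ 2) * p1 + p4 = 0) := by
  constructor
  · intro h0
    -- apply the swap substitution
    have hs : X 1 ^ 2 * p1 + X 0 ^ 2 * p2 + X 1 * X 0 * p3 + p4 = 0 := by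
      have := congrArg (aeval (R := ℂ) (![X 1, X 0, X 2] : Fin 3 → MvPolynomial (Fin 3) ℂ)) h0
      simpa [map_add, map_mul, aeval_X, inv_swap h1, inv_swap h2, inv_swap h3,
        inv_swap h4] using this
    -- apply the reflection substitution
    have hn : X 0 ^ 2 * p1 + X 1 ^ 2 * p2 - X 0 * X 1 * p3 + p4 = 0 := by
      have := congrArg (aeval (R := ℂ) (![X 0, -X 1, X 2] : Fin 3 → MvPolynomial (Fin 3) ℂ)) h0
      simpa [map_add, map_mul, aeval_X, invRefl h1, invRefl h2, invRefl h3,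
        invRefl h4, mul_comm, neg_mul, mul_neg, sub_eq_add_neg] using this
    have key1 : (X 0 ^ 2 - X 1 ^ 2 : MvPolynomial (Fin 3) ℂ) * (p1 - p2) = 0 := by
      linear_combination h0 - hs
    have hp12 : p1 = p2 := by
      rcases mul_eq_zero.mp key1 with h | h
      · exact absurd h aux_sq_ne
      · exact sub_eq_zero.mp h
    have key2 : ((2 : MvPolynomial (Fin 3) ℂ) * (X 0 * X 1)) * p3 = 0 := by
      linear_combination h0 - hn
    have hp3 : p3 = 0 := by
      rcases mul_eq_zero.mp key2 with h | h
      · exact absurd h aux_xy_ne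
      · exact h
    refine ⟨hp12, hp3, ?_⟩
    linear_combination h0 + X 1 ^ 2 * hp12 - X 0 * X 1 * hp3
  · rintro ⟨hp, hq, he⟩
    linear_combination he - X 1 ^ 2 * hp + X 0 * X 1 * hq

end
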